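/- In the Klein model, Euclidean segments are hyperbolic geodesics: for any points x, y in the open unit ball B ⊂ ℝ^n and any z lying on the Euclidean segment [x, y] (i.e. z = (1-t)x + ty for some t ∈ [0,1]), one has d_K(x, y) = d_K(x, z) + d_K(z, y). -/

import Mathlib

open Metric Set
open scoped RealInnerProductSpace

/-!
Write `A = 1 - ‖x‖²`, `B = 1 - ‖y‖²`, `C = 1 - ⟪x, y⟫`. Then `C² - AB ≥ 0` and
`exp (dK x y) = (C + √(C² - AB)) / √(AB)`. Since `(u, v) ↦ 1 - ⟪u, v⟫` is affine in each
argument, the same three quantities for the pairs `(x, z)` and `(z, y)` are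
`A, R, P` and `R, B, Q` with `P = (1-t)A + tC`, `Q = (1-t)C + tB`, `R = (1-t)P + tQ`,
and their discriminants are `t²(C² - AB)` and `(1-t)²(C² - AB)`. With `s = √(C² - AB)` the
identity `(P + ts)(Q + (1-t)s) = R(C + s)` says that the exponentials of the two halves
multiply to the exponential of the whole.
-/

noncomputable def arcosh (x : ℝ) : ℝ := Real.log (x + Real.sqrt (x ^ 2 - 1))

noncomputable def dK {n : ℕ} (x y : EuclideanSpace ℝ (Fin n)) : ℝ :=
  arcosh ((1 - ⟪x, y⟫) / Real.sqrt ((1 - ‖x‖ ^ 2) * (1 - ‖y‖ ^ 2)))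

lemma arcosh_div_sqrt_mul_eq_log {A B C : ℝ} (hAB : 0 < A * B) (hD : A * B ≤ C ^ 2) :
    arcosh (C / √(A * B)) = Real.log ((C + √(C ^ 2 - A * B)) / √(A * B)) := by
  have hsq : (C / √(A * B)) ^ 2 - 1 = (C ^ 2 - A * B) / (A * B) := by
    rw [div_pow, Real.sq_sqrt hAB.le, sub_div, div_self hAB.ne']
  rw [arcosh, hsq, Real.sqrt_div (sub_nonneg.2 hD), ← add_div]

lemma arcosh_div_sqrt_mul_add {A B C P Q R t : ℝ} (hA : 0 < A) (hB : 0 < B) (hC : 0 < C)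
    (hD : A * B ≤ C ^ 2) (ht0 : 0 ≤ t) (ht1 : t ≤ 1)
    (hP : P = (1 - t) * A + t * C) (hQ : Q = (1 - t) * C + t * B)
    (hR : R = (1 - t) * P + t * Q) :
    arcosh (C / √(A * B)) = arcosh (P / √(A * R)) + arcosh (Q / √(R * B)) := by
  have convex_pos : ∀ u v : ℝ, 0 < u → 0 < v → 0 < (1 - t) * u + t * v := fun u v hu hv => by
    rcases ht1.lt_or_eq with h | rfl
    · nlinarith [mul_nonneg ht0 hv.le]
    · simpa using hv
  have hPpos : 0 < P := hP ▸ convex_pos A C hA hC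
  have hQpos : 0 < Q := hQ ▸ convex_pos C B hC hB
  have hRpos : 0 < R := hR ▸ convex_pos P Q hPpos hQpos
  set s := √(C ^ 2 - A * B)
  have hs : s ^ 2 = C ^ 2 - A * B := Real.sq_sqrt (sub_nonneg.2 hD)
  have hs0 : 0 ≤ s := Real.sqrt_nonneg _
  have hdiscP : P ^ 2 - A * R = t ^ 2 * (C ^ 2 - A * B) := by subst hR hP hQ; ring
  have hdiscQ : Q ^ 2 - R * B = (1 - t) ^ 2 * (C ^ 2 - A * B) := by subst hR hP hQ; ring
  have hlogP : arcosh (P / √(A * R)) = Real.log ((P + t * s) / √(A * R)) := by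
    rw [arcosh_div_sqrt_mul_eq_log (by positivity) (by nlinarith [sq_nonneg t]), hdiscP,
      Real.sqrt_mul (sq_nonneg t), Real.sqrt_sq ht0]
  have hlogQ : arcosh (Q / √(R * B)) = Real.log ((Q + (1 - t) * s) / √(R * B)) := by
    rw [arcosh_div_sqrt_mul_eq_log (by positivity) (by nlinarith [sq_nonneg (1 - t)]),
      hdiscQ, Real.sqrt_mul (sq_nonneg (1 - t)), Real.sqrt_sq (sub_nonneg.2 ht1)]
  have hnum : (P + t * s) * (Q + (1 - t) * s) = R * (C + s) := by
    subst hR hP hQ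
    linear_combination (t * (1 - t)) * hs
  have hden : √(A * R) * √(R * B) = R * √(A * B) := by
    rw [← Real.sqrt_mul (by positivity), show A * R * (R * B) = R ^ 2 * (A * B) by ring,
      Real.sqrt_mul (sq_nonneg R), Real.sqrt_sq hRpos.le]
  have hlogPpos : 0 < (P + t * s) / √(A * R) := by positivity
  have hlogQpos : 0 < (Q + (1 - t) * s) / √(R * B) := by
    have := mul_nonneg (sub_nonneg.2 ht1) hs0
    positivity
  rw [hlogP, hlogQ, ← Real.log_mul hlogPpos.ne' hlogQpos.ne', div_mul_div_comm, hnum, hden,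
    mul_div_mul_left _ _ hRpos.ne', arcosh_div_sqrt_mul_eq_log (by positivity) hD]

section InnerProductSpace

variable {E : Type*} [NormedAddCommGroup E] [InnerProductSpace ℝ E]

lemma one_sub_inner_smul_add_smul_left (u v w : E) (t : ℝ) :
    1 - ⟪(1 - t) • u + t • v, w⟫ = (1 - t) * (1 - ⟪u, w⟫) + t * (1 - ⟪v, w⟫) := by
  rw [inner_add_left, real_inner_smul_left, real_inner_smul_left]
  ring

lemma one_sub_inner_smul_add_smul_right (u v w : E) (t : ℝ) :
    1 - ⟪u, (1 - t) • v + t • w⟫ = (1 - t) * (1 - ⟪u, v⟫) + t * (1 - ⟪u, w⟫) := by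
  rw [real_inner_comm, one_sub_inner_smul_add_smul_left, real_inner_comm u, real_inner_comm u]

lemma mul_le_sq_one_sub_inner {x : E} (hx : ‖x‖ ≤ 1) (y : E) :
    (1 - ‖x‖ ^ 2) * (1 - ‖y‖ ^ 2) ≤ (1 - ⟪x, y⟫) ^ 2 := by
  have hxy := norm_sub_sq_real x y
  have h1 : 0 ≤ 1 - ‖x‖ ^ 2 := by nlinarith [norm_nonneg x]
  nlinarith [mul_nonneg h1 (sq_nonneg ‖x - y‖), sq_nonneg (‖x‖ ^ 2 - ⟪x, y⟫)]

end InnerProductSpace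

theorem klein_segments_are_geodesics_general (n : ℕ)
    (x y : EuclideanSpace ℝ (Fin n))
    (hx : x ∈ ball (0 : EuclideanSpace ℝ (Fin n)) 1)
    (hy : y ∈ ball (0 : EuclideanSpace ℝ (Fin n)) 1)
    (t : ℝ) (ht0 : 0 ≤ t) (ht1 : t ≤ 1) :
    dK x y = dK x ((1 - t) • x + t • y) + dK ((1 - t) • x + t • y) y := by
  have hx1 : ‖x‖ < 1 := mem_ball_zero_iff.mp hx
  have hy1 : ‖y‖ < 1 := mem_ball_zero_iff.mp hy
  set z := (1 - t) • x + t • y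
  have hxz : 1 - ⟪x, z⟫ = (1 - t) * (1 - ‖x‖ ^ 2) + t * (1 - ⟪x, y⟫) := by
    rw [one_sub_inner_smul_add_smul_right, real_inner_self_eq_norm_sq]
  have hzy : 1 - ⟪z, y⟫ = (1 - t) * (1 - ⟪x, y⟫) + t * (1 - ‖y‖ ^ 2) := by
    rw [one_sub_inner_smul_add_smul_left, real_inner_self_eq_norm_sq]
  have hzz : 1 - ‖z‖ ^ 2 = (1 - t) * (1 - ⟪x, z⟫) + t * (1 - ⟪z, y⟫) := by
    rw [← real_inner_self_eq_norm_sq, one_sub_inner_smul_add_smul_left, real_inner_comm y]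
  have hC : 0 < 1 - ⟪x, y⟫ := by
    nlinarith [real_inner_le_norm x y, norm_nonneg x, norm_nonneg y]
  unfold dK
  rw [hzz, hxz, hzy]
  exact arcosh_div_sqrt_mul_add (by nlinarith [norm_nonneg x]) (by nlinarith [norm_nonneg y]) hC
    (mul_le_sq_one_sub_inner hx1.le y) ht0 ht1 rfl rfl rfl

theorem klein_segments_are_geodesics (n : ℕ) (hn : 1 ≤ n)
    (x y : EuclideanSpace ℝ (Fin n))
    (hx : x ∈ ball (0 : EuclideanSpace ℝ (Fin n)) 1)
    (hy : y ∈ ball (0 : EuclideanSpace ℝ (Fin n)) 1)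
    (t : ℝ) (ht0 : 0 ≤ t) (ht1 : t ≤ 1) :
    dK x y = dK x ((1 - t) • x + t • y) + dK ((1 - t) • x + t • y) y :=
  klein_segments_are_geodesics_general n x y hx hy t ht0 ht1
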